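/- For every odd positive integer r, the number of Eisenstein integers z = a + bω (with a, b ∈ ℤ, ω = (-1 + i√3)/2) satisfying |Re(z)| ≤ r and |Im(z)| ≤ √3·r/2 equals 4r² + 3r. -/
import Mathlib

/-- The Eisenstein unit ω = (-1 + i√3)/2. -/
noncomputable def eisOmega : ℂ := (-1 + Complex.I * Real.sqrt 3) / 2

/-- The Eisenstein integers ℤ(ω) = {a + bω : a, b ∈ ℤ}. -/
def eisenstein : Set ℂ := {z | ∃ a b : ℤ, z = (a : ℂ) + (b : ℂ) * eisOmega}

/-- The box B_r = {z ∈ ℂ : |Re z| ≤ r, |Im z| ≤ √3·r/2}. -/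
def eisBox (r : ℝ) : Set ℂ := {z | |z.re| ≤ r ∧ |z.im| ≤ Real.sqrt 3 * r / 2}

noncomputable def fE : ℤ × ℤ → ℂ := fun p => (p.1 : ℂ) + (p.2 : ℂ) * eisOmega

lemma eisOmega_re : eisOmega.re = -1/2 := by
  simp [eisOmega]

lemma eisOmega_im : eisOmega.im = Real.sqrt 3 / 2 := by
  simp [eisOmega]

lemma fE_re (p : ℤ × ℤ) : (fE p).re = (p.1 : ℝ) - (p.2 : ℝ)/2 := by
  simp [fE, eisOmega_re, eisOmega_im]
  ring

lemma fE_im (p : ℤ × ℤ) : (fE p).im = (p.2 : ℝ) * (Real.sqrt 3 / 2) := by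
  simp [fE, eisOmega_re, eisOmega_im]

lemma fE_inj : Function.Injective fE := by
  intro p q h
  have him := congrArg Complex.im h
  have hre := congrArg Complex.re h
  rw [fE_im, fE_im] at him
  rw [fE_re, fE_re] at hre
  have h3 : (0:ℝ) < Real.sqrt 3 / 2 := by positivity
  have hb : (p.2 : ℝ) = q.2 := mul_right_cancel₀ (ne_of_gt h3) him
  have hb' : p.2 = q.2 := by exact_mod_cast hb
  have ha : (p.1 : ℝ) = q.1 := by rw [hb] at hre; linarith
  have ha' : p.1 = q.1 := by exact_mod_cast ha
  exact Prod.ext ha' hb'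

lemma mem_iff (r : ℕ) (z : ℂ) :
    z ∈ eisenstein ∩ eisBox r ↔
      ∃ a b : ℤ, z = fE (a, b) ∧ |2*a - b| ≤ 2*(r:ℤ) ∧ |b| ≤ (r:ℤ) := by
  constructor
  · rintro ⟨⟨a, b, rfl⟩, hre, him⟩
    rw [show ((a:ℂ) + (b:ℂ)*eisOmega) = fE (a,b) from rfl] at hre him
    refine ⟨a, b, rfl, ?_, ?_⟩
    · rw [fE_re] at hre
      have : |2*(a:ℝ) - b| ≤ 2*r := by
        rw [abs_le] at hre ⊢
        constructor <;> linarith [hre.1, hre.2]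
      have h2 : ((|2*a - b| : ℤ) : ℝ) ≤ 2*r := by push_cast; exact this
      exact_mod_cast h2
    · rw [fE_im] at him
      have h3 : (0:ℝ) < Real.sqrt 3 / 2 := by positivity
      rw [abs_mul, abs_of_pos h3, show Real.sqrt 3 * r / 2 = (r:ℝ) * (Real.sqrt 3 / 2) by ring] at him
      have hb : |(b:ℝ)| ≤ r := le_of_mul_le_mul_right him h3
      have h2 : ((|b| : ℤ) : ℝ) ≤ r := by push_cast; exact hb
      exact_mod_cast h2
  · rintro ⟨a, b, rfl, h1, h2⟩
    have h1' : |2*(a:ℝ) - b| ≤ 2*r := by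
      have : ((|2*a - b| : ℤ) : ℝ) ≤ ((2*(r:ℤ) : ℤ) : ℝ) := by exact_mod_cast h1
      push_cast at this; exact this
    have h2' : |(b:ℝ)| ≤ r := by
      have : ((|b| : ℤ) : ℝ) ≤ ((r:ℤ) : ℝ) := by exact_mod_cast h2
      push_cast at this; exact this
    refine ⟨⟨a, b, rfl⟩, ?_, ?_⟩
    · rw [fE_re]
      rw [abs_le] at h1' ⊢
      constructor <;> linarith [h1'.1, h1'.2]
    · rw [fE_im]
      have h3 : (0:ℝ) ≤ Real.sqrt 3 / 2 := by positivity
      calc |(b:ℝ) * (Real.sqrt 3/2)| = |(b:ℝ)| * (Real.sqrt 3/2) := by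
            rw [abs_mul, abs_of_nonneg h3]
        _ ≤ (r:ℝ) * (Real.sqrt 3/2) := by
            apply mul_le_mul_of_nonneg_right h2' h3
        _ = Real.sqrt 3 * r / 2 := by ring

theorem eisenstein_count_odd (r : ℕ) (hodd : Odd r) (hpos : 0 < r) :
    (eisenstein ∩ eisBox r).ncard = 4 * r ^ 2 + 3 * r := by
  obtain ⟨k, hk⟩ := hodd
  have hk' : (r : ℤ) = 2*k + 1 := by exact_mod_cast hk
  set g0 : ℤ × ℤ → ℤ × ℤ := fun p => (p.1 + p.2, 2*p.2) with hg0
  set g1 : ℤ × ℤ → ℤ × ℤ := fun p => (p.1 + p.2, 2*p.2 + 1) with hg1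
  have inj0 : Function.Injective g0 := by
    intro p q h
    simp only [hg0, Prod.mk.injEq] at h
    exact Prod.ext (by omega) (by omega)
  have inj1 : Function.Injective g1 := by
    intro p q h
    simp only [hg1, Prod.mk.injEq] at h
    exact Prod.ext (by omega) (by omega)
  set B0 : Finset (ℤ × ℤ) :=
    (Finset.Icc (-(r:ℤ)) r ×ˢ Finset.Icc (-(k:ℤ)) k).image g0 with hB0
  set B1 : Finset (ℤ × ℤ) :=
    (Finset.Icc (1-(r:ℤ)) r ×ˢ Finset.Icc (-(k:ℤ)-1) k).image g1 with hB1
  have hset : eisenstein ∩ eisBox r = ↑((B0 ∪ B1).image fE) := by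
    ext z
    rw [mem_iff]
    simp only [Finset.coe_image, Set.mem_image, Finset.mem_coe, Finset.mem_union, hB0, hB1,
      Finset.mem_image, Finset.mem_product, Finset.mem_Icc, hg0, hg1]
    constructor
    · rintro ⟨a, b, rfl, h1, h2⟩
      rw [abs_le] at h1 h2
      refine ⟨(a, b), ?_, rfl⟩
      rcases Int.even_or_odd b with ⟨c, hc⟩ | ⟨c, hc⟩
      · exact Or.inl ⟨(a - c, c), ⟨⟨by omega, by omega⟩, by omega⟩, by simp; omega⟩
      · exact Or.inr ⟨(a - c, c), ⟨⟨by omega, by omega⟩, by omega⟩, by simp; omega⟩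
    · rintro ⟨p, hp | hp, rfl⟩
      · obtain ⟨⟨u, c⟩, ⟨⟨hu1, hu2⟩, hc1, hc2⟩, rfl⟩ := hp
        exact ⟨u + c, 2*c, rfl, by rw [abs_le]; omega, by rw [abs_le]; omega⟩
      · obtain ⟨⟨u, c⟩, ⟨⟨hu1, hu2⟩, hc1, hc2⟩, rfl⟩ := hp
        exact ⟨u + c, 2*c + 1, rfl, by rw [abs_le]; omega, by rw [abs_le]; omega⟩
  rw [hset, Set.ncard_coe_finset, Finset.card_image_of_injective _ fE_inj]
  have hdisj : Disjoint B0 B1 := by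
    rw [Finset.disjoint_left]
    rintro p hp0 hp1
    simp only [hB0, hB1, Finset.mem_image, hg0, hg1] at hp0 hp1
    obtain ⟨q, -, hq⟩ := hp0
    obtain ⟨q', -, hq'⟩ := hp1
    have := congrArg Prod.snd hq
    have := congrArg Prod.snd hq'
    simp at *
    omega
  rw [Finset.card_union_of_disjoint hdisj]
  rw [hB0, hB1, Finset.card_image_of_injective _ inj0, Finset.card_image_of_injective _ inj1,
    Finset.card_product, Finset.card_product, Int.card_Icc, Int.card_Icc, Int.card_Icc,
    Int.card_Icc]
  have e1 : ((r:ℤ) + 1 - -(r:ℤ)).toNat = 2*r + 1 := by omega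
  have e2 : ((k:ℤ) + 1 - -(k:ℤ)).toNat = r := by omega
  have e3 : ((r:ℤ) + 1 - (1 - (r:ℤ))).toNat = 2*r := by omega
  have e4 : ((k:ℤ) + 1 - (-(k:ℤ) - 1)).toNat = r + 1 := by omega
  rw [e1, e2, e3, e4]
  ring
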